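/- For every n ≥ 9, with S = {0, 1, 3} ⊆ ℤ/nℤ, the Cayley poset P(ℤ/nℤ, S) is a Cayley representation of ℤ/nℤ: every order automorphism of P(ℤ/nℤ, S) is translation by an element of ℤ/nℤ. -/

import Mathlib

variable {G : Type*}

/-- The order relation of the (additive) Cayley poset `P(G,S)`: the underlying set is
the disjoint union of two copies of `G` (`Sum.inl g` written `g`, `Sum.inr h` written
`h'`), with `g < h'` iff `h - g ∈ S`, and no other distinct elements comparable. -/
def addCayleyLE [AddGroup G] (S : Set G) : G ⊕ G → G ⊕ G → Prop
  | Sum.inl g, Sum.inl h => g = h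
  | Sum.inl g, Sum.inr h => h - g ∈ S
  | Sum.inr _, Sum.inl _ => False
  | Sum.inr g, Sum.inr h => g = h

/-- The additive Cayley poset `P(G,S)` as a type synonym for `G ⊕ G`. -/
def AddCayleyPoset (G : Type*) [AddGroup G] (S : Set G) : Type _ := G ⊕ G

instance [AddGroup G] (S : Set G) : PartialOrder (AddCayleyPoset G S) where
  le x y := addCayleyLE S x y
  le_refl x := by cases x <;> exact rfl
  le_trans x y z hxy hyz := by
    cases x <;> cases y <;> cases z <;> simp_all [addCayleyLE]
  le_antisymm x y hxy hyx := by
    cases x <;> cases y <;> simp_all [addCayleyLE] <;> rfl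

/-- The translation `L(g)` on `P(G,S)`: `h ↦ g + h` on minimal points and
`h' ↦ (g + h)'` on maximal points. -/
def addCayleyL [AddGroup G] (g : G) : G ⊕ G → G ⊕ G
  | Sum.inl h => Sum.inl (g + h)
  | Sum.inr h => Sum.inr (g + h)

/-- `P(G,S)` is a Cayley representation of the additive group `G` if every order
automorphism of the Cayley poset `P(G,S)` is a translation. -/
def IsAddCayleyRep (G : Type*) [AddGroup G] (S : Set G) : Prop :=
  ∀ φ : AddCayleyPoset G S ≃o AddCayleyPoset G S,
    ∃ g : G, ∀ p : AddCayleyPoset G S, φ p = addCayleyL g p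

/-!
Since `S` is nonempty, the points of the first copy are exactly the non-maximal ones, so an
automorphism is `g ↦ a g`, `h' ↦ (b h)'` for maps with `h - g ∈ S ↔ b h - a g ∈ S`. For
`S = {0, 1, 3}` this says that `a` maps the lower neighbours `h - 3, h - 1, h` of `h'` bijectively
onto `b h - 3, b h - 1, b h`. Hence the differences `a (g + 1) - a g` lie in `{±1, ±2, ±3}`, and
any three consecutive ones obey a local rule (`AdmissibleSteps`); a finite check shows that four
consecutive instances of the rule force the difference `1`. So `a` is translation by `a 0`, and
then so is `b`, because no nonzero translation fixes `{0, 1, 3}`.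
-/

open Function Pointwise

namespace AddCayleyPoset

section AddGroup

variable [AddGroup G] (S : Set G)

def inl (g : G) : AddCayleyPoset G S := Sum.inl g

def inr (h : G) : AddCayleyPoset G S := Sum.inr h

variable {S}

theorem inl_le_inr_iff {g h : G} : inl S g ≤ inr S h ↔ h - g ∈ S := Iff.rfl

theorem isMax_inr (h : G) : IsMax (inr S h) := by
  rintro (q | q) hle
  · exact hle.elim
  · exact (show h = q from hle) ▸ le_rfl

theorem not_isMax_inl (hS : S.Nonempty) (g : G) : ¬IsMax (inl S g) := by
  obtain ⟨s, hs⟩ := hS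
  have hle : inl S g ≤ inr S (s + g) := by rwa [inl_le_inr_iff, add_sub_cancel_right]
  exact fun hmax => hmax hle

theorem exists_eq_inl_inr (hS : S.Nonempty) (φ : AddCayleyPoset G S ≃o AddCayleyPoset G S) :
    ∃ a b : G → G, ∀ g, φ (inl S g) = inl S (a g) ∧ φ (inr S g) = inr S (b g) := by
  have hleft (g : G) : ∃ a, φ (inl S g) = inl S a := by
    rcases hφ : φ (inl S g) with a | b
    · exact ⟨a, rfl⟩
    · refine absurd ?_ (not_isMax_inl hS g)
      rw [← φ.isMax_apply, hφ]
      exact isMax_inr b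
  have hright (h : G) : ∃ b, φ (inr S h) = inr S b := by
    rcases hφ : φ (inr S h) with a | b
    · change _ = inl S a at hφ
      refine absurd ?_ (not_isMax_inl hS a)
      rw [← hφ, φ.isMax_apply]
      exact isMax_inr h
    · exact ⟨b, rfl⟩
  choose a ha using hleft
  choose b hb using hright
  exact ⟨a, b, fun g => ⟨ha g, hb g⟩⟩

theorem isAddCayleyRep_of_forall_mem_iff (hS : S.Nonempty)
    (H : ∀ a b : G → G, Injective a → (∀ g h, h - g ∈ S ↔ b h - a g ∈ S) →
      ∃ c, ∀ g, a g = c + g ∧ b g = c + g) :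
    IsAddCayleyRep G S := by
  intro φ
  obtain ⟨a, b, hφ⟩ := exists_eq_inl_inr hS φ
  have ha : Injective a := fun g g' e =>
    Sum.inl_injective <| φ.injective <|
      show φ (inl S g) = φ (inl S g') by rw [(hφ g).1, (hφ g').1, e]
  have hab (g h : G) : h - g ∈ S ↔ b h - a g ∈ S := by
    rw [← inl_le_inr_iff, ← φ.le_iff_le, (hφ g).1, (hφ h).2, inl_le_inr_iff]
  obtain ⟨c, hc⟩ := H a b ha hab
  refine ⟨c, fun p => ?_⟩
  rcases p with g | h
  · exact ((hφ g).1.trans (congrArg (inl S) (hc g).1) :)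
  · exact ((hφ h).2.trans (congrArg (inr S) (hc h).2) :)

end AddGroup

theorem eq_add_of_stabilizer_eq_bot [AddCommGroup G] {S : Set G}
    (hS : AddAction.stabilizer G S = ⊥) {a b : G → G} {c : G} (ha : ∀ g, a g = c + g)
    (hab : ∀ g h, h - g ∈ S ↔ b h - a g ∈ S) (h : G) : b h = c + h := by
  have hmem : b h - c - h ∈ AddAction.stabilizer G S := by
    refine AddAction.mem_stabilizer_set.2 fun t => ?_
    have := hab (h - t) h
    rw [ha, sub_sub_cancel] at this
    rw [vadd_eq_add, this]
    abel_nf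
  rw [hS, AddSubgroup.mem_bot, sub_sub, sub_eq_zero] at hmem
  exact hmem

end AddCayleyPoset

namespace ZMod

variable {n : ℕ}

theorem dvd_sub_of_intCast_eq {m : ℕ} {x y : ℤ} (h : (x : ZMod n) = y) (hm : m ≤ n)
    (hxy : |x - y| ≤ m) : (m : ℤ) ∣ x - y := by
  have hn : (n : ℤ) ∣ x - y := by
    rw [← dvd_neg, neg_sub]
    exact (intCast_eq_intCast_iff_dvd_sub x y n).1 h
  rcases lt_or_ge |x - y| n with hlt | hge
  · rw [Int.eq_zero_of_abs_lt_dvd hn hlt]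
    exact dvd_zero _
  · rwa [le_antisymm (Int.ofNat_le.2 hm) (hge.trans hxy)]

theorem eq_add_of_map_add_one {a : ZMod n → ZMod n} (h : ∀ g, a (g + 1) = a g + 1)
    (g : ZMod n) : a g = a 0 + g := by
  obtain ⟨k, rfl⟩ := intCast_surjective g
  refine Int.induction_on k (by simp) (fun k ih => ?_) (fun k ih => ?_)
  · push_cast at ih ⊢
    rw [h, ih, add_assoc]
  · have := h (-k - 1)
    push_cast at ih ⊢
    rw [sub_add_cancel, ih] at this
    linear_combination -this

theorem mem_zero_one_three_iff {x : ZMod n} :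
    x ∈ ({0, 1, 3} : Set (ZMod n)) ↔ ∃ i ∈ ({0, 1, 3} : Finset ℤ), x = i := by
  simp

theorem stabilizer_zero_one_three_eq_bot (hn : 5 ≤ n) :
    AddAction.stabilizer (ZMod n) ({0, 1, 3} : Set (ZMod n)) = ⊥ := by
  have four_notMem : (4 : ZMod n) ∉ ({0, 1, 3} : Set (ZMod n)) := by
    rw [mem_zero_one_three_iff]
    rintro ⟨i, hi, e⟩
    have := dvd_sub_of_intCast_eq (x := 4) (by exact_mod_cast e) hn
    simp only [Finset.mem_insert, Finset.mem_singleton] at hi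
    rcases hi with rfl | rfl | rfl <;> norm_num at this
  ext e
  simp only [AddAction.mem_stabilizer_set, vadd_eq_add, AddSubgroup.mem_bot]
  refine ⟨fun he => ?_, fun he t => by rw [he, zero_add]⟩
  have h0 := (he 0).2 (by simp)
  have h1 := (he 1).2 (by simp)
  have h3 := (he 3).2 (by simp)
  simp only [add_zero, Set.mem_insert_iff, Set.mem_singleton_iff] at h0
  rcases h0 with rfl | rfl | rfl
  · rfl
  · exact absurd (by convert h3 using 1; norm_num) four_notMem
  · exact absurd (by convert h1 using 1; norm_num) four_notMem

end ZMod

/-- Three consecutive differences `x, y, z` of `a`, starting at `g`, are constrained by the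
lower neighbours of `(g + 3)'`: `a g, a (g + 2), a (g + 3)` are `c - i, c - j, c - k` for distinct
`i, j, k ∈ {0, 1, 3}`. Only `x + y ≡ i - j [ZMOD n]` is known; as `|x + y - (i - j)| ≤ 9 ≤ n`,
this is divisibility by `9`. -/
def AdmissibleSteps (x y z : ℤ) : Prop :=
  ∃ i ∈ ({0, 1, 3} : Finset ℤ), ∃ j ∈ ({0, 1, 3} : Finset ℤ), ∃ k ∈ ({0, 1, 3} : Finset ℤ),
    i ≠ j ∧ j ≠ k ∧ i ≠ k ∧ 9 ∣ x + y - (i - j) ∧ z = j - k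

instance (x y z : ℤ) : Decidable (AdmissibleSteps x y z) :=
  inferInstanceAs (Decidable (∃ _ ∈ _, _))

theorem AdmissibleSteps.eq_one_of_chain :
    ∀ x₀ ∈ Finset.Icc (-3 : ℤ) 3, ∀ x₁ ∈ Finset.Icc (-3 : ℤ) 3, ∀ x₂ ∈ Finset.Icc (-3 : ℤ) 3,
      AdmissibleSteps x₀ x₁ x₂ → ∀ x₃ ∈ Finset.Icc (-3 : ℤ) 3, AdmissibleSteps x₁ x₂ x₃ →
      ∀ x₄ ∈ Finset.Icc (-3 : ℤ) 3, AdmissibleSteps x₂ x₃ x₄ →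
      ∀ x₅ ∈ Finset.Icc (-3 : ℤ) 3, AdmissibleSteps x₃ x₄ x₅ → x₀ = 1 := by
  decide +kernel

theorem eq_one_of_forall_admissibleSteps {M : Type*} [AddMonoidWithOne M] {x : M → ℤ}
    (hx : ∀ g, x g ∈ Finset.Icc (-3 : ℤ) 3)
    (h : ∀ g, AdmissibleSteps (x g) (x (g + 1)) (x (g + 2))) (g : M) : x g = 1 := by
  have hs (k : ℕ) : AdmissibleSteps (x (g + k)) (x (g + (k + 1 : ℕ))) (x (g + (k + 2 : ℕ))) := by
    simpa only [Nat.cast_add, Nat.cast_one, Nat.cast_ofNat, add_assoc] using h (g + k)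
  simpa using AdmissibleSteps.eq_one_of_chain _ (hx _) _ (hx _) _ (hx _) (hs 0) _ (hx _) (hs 1)
    _ (hx _) (hs 2) _ (hx _) (hs 3)

namespace ZMod

variable {n : ℕ} {a b : ZMod n → ZMod n}

theorem exists_eq_sub_of_forall_mem_iff (hn : 9 ≤ n) (ha : Injective a)
    (hab : ∀ g h, h - g ∈ ({0, 1, 3} : Set (ZMod n)) ↔ b h - a g ∈ ({0, 1, 3} : Set (ZMod n)))
    (h : ZMod n) :
    ∃ i ∈ ({0, 1, 3} : Finset ℤ), ∃ j ∈ ({0, 1, 3} : Finset ℤ), ∃ k ∈ ({0, 1, 3} : Finset ℤ),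
      i ≠ j ∧ j ≠ k ∧ i ≠ k ∧ a (h - 3) = b h - i ∧ a (h - 1) = b h - j ∧ a h = b h - k := by
  have hmem (t : ℤ) (ht : t ∈ ({0, 1, 3} : Finset ℤ)) :
      ∃ i ∈ ({0, 1, 3} : Finset ℤ), a (h - t) = b h - i := by
    obtain ⟨i, hi, e⟩ := mem_zero_one_three_iff.1 <|
      (hab (h - t) h).1 (mem_zero_one_three_iff.2 ⟨t, ht, by ring⟩)
    exact ⟨i, hi, by rw [← e]; ring⟩
  have hne (s t : ℤ) (hs : s ∈ ({0, 1, 3} : Finset ℤ)) (ht : t ∈ ({0, 1, 3} : Finset ℤ))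
      (e : a (h - s) = a (h - t)) : s = t := by
    have hst := sub_right_injective (ha e)
    simp only [Finset.mem_insert, Finset.mem_singleton] at hs ht
    rcases hs with rfl | rfl | rfl <;> rcases ht with rfl | rfl | rfl <;>
      first | rfl | have := dvd_sub_of_intCast_eq hst hn (by norm_num); omega
  obtain ⟨i, hi, ei⟩ := hmem 3 (by decide)
  obtain ⟨j, hj, ej⟩ := hmem 1 (by decide)
  obtain ⟨k, hk, ek⟩ := hmem 0 (by decide)
  refine ⟨i, hi, j, hj, k, hk, ?_, ?_, ?_, by exact_mod_cast ei, by exact_mod_cast ej,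
    by simpa using ek⟩
  · rintro rfl
    exact absurd (hne 3 1 (by decide) (by decide) (ei.trans ej.symm)) (by norm_num)
  · rintro rfl
    exact absurd (hne 1 0 (by decide) (by decide) (ej.trans ek.symm)) (by norm_num)
  · rintro rfl
    exact absurd (hne 3 0 (by decide) (by decide) (ei.trans ek.symm)) (by norm_num)

theorem exists_sub_eq_intCast_of_forall_mem_iff (hn : 9 ≤ n) (ha : Injective a)
    (hab : ∀ g h, h - g ∈ ({0, 1, 3} : Set (ZMod n)) ↔ b h - a g ∈ ({0, 1, 3} : Set (ZMod n)))
    (g : ZMod n) : ∃ x ∈ Finset.Icc (-3 : ℤ) 3, a (g + 1) - a g = x := by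
  obtain ⟨-, -, j, hj, k, hk, -, -, -, -, ej, ek⟩ :=
    exists_eq_sub_of_forall_mem_iff hn ha hab (g + 1)
  refine ⟨j - k, ?_, ?_⟩
  · simp only [Finset.mem_insert, Finset.mem_singleton] at hj hk
    simp only [Finset.mem_Icc]
    omega
  · rw [add_sub_cancel_right] at ej
    rw [ej, ek]
    push_cast
    ring

theorem admissibleSteps_of_forall_mem_iff (hn : 9 ≤ n) (ha : Injective a)
    (hab : ∀ g h, h - g ∈ ({0, 1, 3} : Set (ZMod n)) ↔ b h - a g ∈ ({0, 1, 3} : Set (ZMod n)))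
    {x : ZMod n → ℤ} (hx : ∀ g, x g ∈ Finset.Icc (-3 : ℤ) 3) (hax : ∀ g, a (g + 1) - a g = x g)
    (g : ZMod n) : AdmissibleSteps (x g) (x (g + 1)) (x (g + 2)) := by
  obtain ⟨i, hi, j, hj, k, hk, hij, hjk, hik, ei, ej, ek⟩ :=
    exists_eq_sub_of_forall_mem_iff hn ha hab (g + 3)
  rw [add_sub_cancel_right] at ei
  rw [show g + 3 - 1 = g + 1 + 1 by ring] at ej
  have hsum : ((x g + x (g + 1) : ℤ) : ZMod n) = ((i - j : ℤ) : ZMod n) := by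
    push_cast
    rw [← hax g, ← hax (g + 1), ej, ei]
    ring
  have hlast : ((x (g + 2) : ℤ) : ZMod n) = ((j - k : ℤ) : ZMod n) := by
    push_cast
    rw [← hax (g + 2), show g + 2 + 1 = g + 3 by ring, ek, show g + 2 = g + 1 + 1 by ring, ej]
    ring
  simp only [Finset.mem_insert, Finset.mem_singleton] at hi hj hk
  have b₀ := Finset.mem_Icc.1 (hx g)
  have b₁ := Finset.mem_Icc.1 (hx (g + 1))
  have b₂ := Finset.mem_Icc.1 (hx (g + 2))
  have d₁ := dvd_sub_of_intCast_eq hsum hn (abs_le.2 ⟨by omega, by omega⟩)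
  have d₂ := dvd_sub_of_intCast_eq hlast hn (abs_le.2 ⟨by omega, by omega⟩)
  exact ⟨i, by simpa using hi, j, by simpa using hj, k, by simpa using hk, hij, hjk, hik,
    by exact_mod_cast d₁, by omega⟩

theorem map_add_one_of_forall_mem_iff (hn : 9 ≤ n) (ha : Injective a)
    (hab : ∀ g h, h - g ∈ ({0, 1, 3} : Set (ZMod n)) ↔ b h - a g ∈ ({0, 1, 3} : Set (ZMod n)))
    (g : ZMod n) : a (g + 1) = a g + 1 := by
  choose x hx hax using exists_sub_eq_intCast_of_forall_mem_iff hn ha hab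
  have hx₁ := eq_one_of_forall_admissibleSteps hx
    (admissibleSteps_of_forall_mem_iff hn ha hab hx hax) g
  rw [← sub_eq_iff_eq_add', hax, hx₁, Int.cast_one]

end ZMod

/-- For every `n ≥ 9`, with `S = {0, 1, 3} ⊆ ℤ/nℤ`, the Cayley poset
`P(ℤ/nℤ, S)` is a Cayley representation of `ℤ/nℤ`. -/
theorem zmod_cayleyRep (n : ℕ) (hn : 9 ≤ n) :
    IsAddCayleyRep (ZMod n) ({0, 1, 3} : Set (ZMod n)) := by
  refine AddCayleyPoset.isAddCayleyRep_of_forall_mem_iff (Set.insert_nonempty _ _)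
    fun a b ha hab => ?_
  have ha' := ZMod.eq_add_of_map_add_one (ZMod.map_add_one_of_forall_mem_iff hn ha hab)
  have hstab := ZMod.stabilizer_zero_one_three_eq_bot (n := n) (by omega)
  exact ⟨a 0, fun g => ⟨ha' g, AddCayleyPoset.eq_add_of_stabilizer_eq_bot hstab ha' hab g⟩⟩
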